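/- arXiv:1401.6574 — 2 statements merged into one kernel-verified Lean document; each statement's English description precedes it below -/
import Mathlib

section
/- (Joyal) In a cartesian closed category with an initial object 0 in which negation is involutive—i.e. the canonical morphism A → (A ⇒ 0) ⇒ 0 is an isomorphism for every object A—there is at most one morphism between any two objects; hence the category is a preorder. -/
/-! In a cartesian closed category every morphism into `0` is an isomorphism, so there is at
most one morphism from any object into `0`, and hence, by currying, at most one morphism
`A ⟶ ¬X` for all `A` and `X`. If `B ≅ ¬¬B`, this makes `A ⟶ B` a subsingleton. -/

open CategoryTheory CategoryTheory.Limits MonoidalCategory CartesianClosed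

variable {C : Type*} [Category C] [CartesianMonoidalCategory C] [MonoidalClosed C] [HasInitial C]

attribute [local instance] BraidedCategory.ofCartesianMonoidalCategory

/-- The canonical double-negation morphism `A ⟶ ((A ⇒ 0) ⇒ 0)` in a cartesian closed
category with initial object `0`, where `¬A := A ⇒ 0`. -/
noncomputable def doubleNegUnit (A : C) : A ⟶ ((A ⟹ ⊥_ C) ⟹ ⊥_ C) :=
  MonoidalClosed.curry ((β_ (A ⟹ ⊥_ C) A).hom ≫ (ihom.ev A).app (⊥_ C))

theorem subsingleton_hom_initial (Y : C) : Subsingleton (Y ⟶ ⊥_ C) :=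
  ⟨fun f g => eq_of_inv_eq_inv (initialIsInitial.hom_ext (inv f) (inv g))⟩

theorem subsingleton_hom_ihom_initial (A X : C) : Subsingleton (A ⟶ (X ⟹ ⊥_ C)) :=
  have := subsingleton_hom_initial ((tensorLeft X).obj A)
  ((ihom.adjunction X).homEquiv A (⊥_ C)).symm.subsingleton

/-- (Joyal) In a cartesian closed category with an initial object `0` in which negation is
involutive — i.e. the canonical morphism `A ⟶ (A ⇒ 0) ⇒ 0` is an isomorphism for every
object `A` — there is at most one morphism between any two objects; hence the category is
a preorder. -/
theorem joyal_preorder (h : ∀ A : C, IsIso (doubleNegUnit A)) (A B : C) :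
    Subsingleton (A ⟶ B) := by
  have := h B
  have := subsingleton_hom_ihom_initial A (B ⟹ ⊥_ C)
  exact ⟨fun f g => (cancel_mono (doubleNegUnit B)).1 (Subsingleton.elim _ _)⟩
end

section
/- For coherence spaces A and B, the coherence space !(A & B) is isomorphic to !A ⊗ !B: finite cliques of A & B correspond bijectively to pairs of a finite clique of A and a finite clique of B, and this bijection preserves and reflects coherence. -/
structure CoherenceSpace (α : Type*) where
  coh : α → α → Prop
  refl : ∀ x, coh x x
  symm : ∀ {x y}, coh x y → coh y x

def CoherenceSpace.IsClique {α : Type*} (A : CoherenceSpace α) (s : Set α) : Prop :=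
  ∀ ⦃x⦄, x ∈ s → ∀ ⦃y⦄, y ∈ s → A.coh x y

/-- The additive conjunction `A & B`: disjoint union of the graphs with every token of
`A` coherent with every token of `B`. -/
def CoherenceSpace.with_ {α β : Type*} (A : CoherenceSpace α) (B : CoherenceSpace β) :
    CoherenceSpace (α ⊕ β) where
  coh x y :=
    match x, y with
    | .inl a, .inl a' => A.coh a a'
    | .inr b, .inr b' => B.coh b b'
    | _, _ => True
  refl x := by cases x <;> simp [A.refl, B.refl]
  symm {x y} h := by
    cases x <;> cases y <;> simp_all <;> first | exact A.symm h | exact B.symm h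

/-- The multiplicative conjunction `A ⊗ B`: componentwise coherence on `|A| × |B|`. -/
def CoherenceSpace.tens {α β : Type*} (A : CoherenceSpace α) (B : CoherenceSpace β) :
    CoherenceSpace (α × β) where
  coh p q := A.coh p.1 q.1 ∧ B.coh p.2 q.2
  refl p := ⟨A.refl _, B.refl _⟩
  symm h := ⟨A.symm h.1, B.symm h.2⟩

/-- The exponential `!A`: tokens are the finite cliques of `A`, two being coherent iff
their union is a clique of `A`. -/
def CoherenceSpace.bang {α : Type*} (A : CoherenceSpace α) :
    CoherenceSpace {s : Set α // s.Finite ∧ A.IsClique s} where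
  coh s t := A.IsClique (s.1 ∪ t.1)
  refl s := by simpa [Set.union_self] using s.2.2
  symm := fun {s t} h => by
    have h' : A.IsClique (↑s ∪ ↑t) := h
    rw [Set.union_comm] at h'
    exact h'

/-!
Tokens from different summands of `A & B` are always coherent, so a set of tokens is a
(finite) clique of `A & B` exactly when its restrictions to both summands are. Restriction
commutes with unions, hence coherence in `!(A & B)` is coherence in both components.
-/

namespace CoherenceSpace

variable {α β : Type*} (A : CoherenceSpace α) (B : CoherenceSpace β)

theorem isClique_with_iff (s : Set (α ⊕ β)) :
    (A.with_ B).IsClique s ↔ A.IsClique (Sum.inl ⁻¹' s) ∧ B.IsClique (Sum.inr ⁻¹' s) := by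
  refine ⟨fun h => ⟨fun _ hx _ hy => h hx hy, fun _ hx _ hy => h hx hy⟩, ?_⟩
  rintro ⟨hA, hB⟩ (_ | _) hx (_ | _) hy
  exacts [hA hx hy, trivial, trivial, hB hx hy]

theorem finite_and_isClique_with_iff (s : Set (α ⊕ β)) :
    s.Finite ∧ (A.with_ B).IsClique s ↔
      ((Sum.inl ⁻¹' s).Finite ∧ A.IsClique (Sum.inl ⁻¹' s)) ∧
        ((Sum.inr ⁻¹' s).Finite ∧ B.IsClique (Sum.inr ⁻¹' s)) := by
  rw [isClique_with_iff, ← Set.finite_preimage_inl_and_inr]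
  tauto

def bangWithEquiv :
    {s : Set (α ⊕ β) // s.Finite ∧ (A.with_ B).IsClique s} ≃
      {a : Set α // a.Finite ∧ A.IsClique a} × {b : Set β // b.Finite ∧ B.IsClique b} :=
  (Set.sumEquiv.toEquiv.subtypeEquiv (A.finite_and_isClique_with_iff B)).trans
    Equiv.subtypeProdEquivProd

theorem coh_bangWithEquiv (s t) :
    (A.bang.tens B.bang).coh (A.bangWithEquiv B s) (A.bangWithEquiv B t) ↔
      (A.with_ B).bang.coh s t :=
  (A.isClique_with_iff B (s.1 ∪ t.1)).symm

end CoherenceSpace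

/-- `!(A & B)` is isomorphic to `!A ⊗ !B`: finite cliques of `A & B` correspond
bijectively to pairs of a finite clique of `A` and a finite clique of `B`, and this
bijection preserves and reflects coherence. -/
theorem bang_with_iso_tens_bang_bang {α β : Type*}
    (A : CoherenceSpace α) (B : CoherenceSpace β) :
    ∃ e : {s : Set (α ⊕ β) // s.Finite ∧ (A.with_ B).IsClique s} ≃
          {a : Set α // a.Finite ∧ A.IsClique a} × {b : Set β // b.Finite ∧ B.IsClique b},
      ∀ s t, (A.with_ B).bang.coh s t ↔ ((A.bang).tens (B.bang)).coh (e s) (e t) :=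
  ⟨A.bangWithEquiv B, fun s t => (A.coh_bangWithEquiv B s t).symm⟩
end
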